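/- Let w be a right-infinite word over a finite alphabet that is not eventually periodic, and suppose every letter of the alphabet occurs in w. In the monomial algebra A_w = k{Σ}/I (I generated by non-factors of w), if the first letter of w occurs at least twice in w, then A_w is a prime ring. -/

import Mathlib

/-- A monoid morphism applied to a word. -/
def applyM {α : Type*} (φ : α → List α) (u : List α) : List α := u.flatMap φ

/-- The block of `len` consecutive letters of `w` starting at position `i`. -/
def toListW {α : Type*} (w : ℕ → α) (i len : ℕ) : List α :=
  (List.range len).map fun k => w (i + k)

/-- `v` is a factor (subword) of the right-infinite word `w`. -/
def IsFactor {α : Type*} (v : List α) (w : ℕ → α) : Prop :=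
  ∃ i, toListW w i v.length = v

/-- `v` is a prefix of the right-infinite word `w`. -/
def IsPrefixW {α : Type*} (v : List α) (w : ℕ → α) : Prop :=
  toListW w 0 v.length = v

/-- `w` is eventually periodic. -/
def EventuallyPeriodic {α : Type*} (w : ℕ → α) : Prop :=
  ∃ N P : ℕ, 0 < P ∧ ∀ n : ℕ, N ≤ n → w (n + P) = w n

/-- The relation on the free algebra identifying with `0` every monomial
corresponding to a finite word that is not a factor of `w`. -/
def relOf (k : Type*) [Field k] {α : Type*} (w : ℕ → α) :
    FreeAlgebra k α → FreeAlgebra k α → Prop :=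
  fun p q => q = 0 ∧ ∃ v : List α, ¬ IsFactor v w ∧ p = (v.map (FreeAlgebra.ι k)).prod

/-- The monomial algebra `A_w = k{Σ}/I`. -/
abbrev Aw (k : Type*) [Field k] {α : Type*} (w : ℕ → α) : Type _ := RingQuot (relOf k w)

/-!
If `P` and `Q` represent nonzero elements of `A_w` by combinations of factors of `w`, pick
monomials `v`, `v'` of maximal length in their supports and a word `u` such that `v u v'` is a
factor of `w`. The coefficient of `v u v'` in `P u Q` is then the product of the coefficients of
`v` and `v'`, so `P u Q` is not in the span of the non-factors, which is the kernel of the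
map from the monoid algebra of the free monoid onto `A_w`.

Such a `u` exists for the fixed point `w` because its first letter `b` recurs: if `w i = b` with
`i > 0`, then `φⁿ(w[0, i)) φⁿ(b)` is a prefix of `w`, so every prefix `φⁿ(b)` occurs again after
its own end, and two factors of `w` can be read in two disjoint copies of a long prefix.
-/

section Words

variable {α : Type*} {w : ℕ → α}

@[simp]
theorem toListW_length (w : ℕ → α) (i l : ℕ) : (toListW w i l).length = l := by
  simp [toListW]

theorem toListW_add (w : ℕ → α) (i l₁ l₂ : ℕ) :
    toListW w i (l₁ + l₂) = toListW w i l₁ ++ toListW w (i + l₁) l₂ := by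
  simp [toListW, List.range_add, Nat.add_assoc]

theorem toListW_succ (w : ℕ → α) (i l : ℕ) :
    toListW w i (l + 1) = toListW w i l ++ [w (i + l)] := by
  rw [toListW_add]; simp [toListW]

theorem toListW_one_add (w : ℕ → α) (i l : ℕ) :
    toListW w i (1 + l) = w i :: toListW w (i + 1) l := by
  rw [toListW_add]; simp [toListW]

theorem eq_of_toListW_eq {i j l t : ℕ} (h : toListW w i l = toListW w j l) (ht : t < l) :
    w (i + t) = w (j + t) := by
  simpa [toListW, ht] using congrArg (·[t]?) h

theorem isPrefixW_toListW (w : ℕ → α) (l : ℕ) : IsPrefixW (toListW w 0 l) w := by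
  simp [IsPrefixW]

theorem toListW_congr {i j l : ℕ} (h : ∀ t < l, w (i + t) = w (j + t)) :
    toListW w i l = toListW w j l :=
  List.map_congr_left fun t ht => h t (List.mem_range.mp ht)

theorem IsFactor.of_append_left {u v : List α} (h : IsFactor (u ++ v) w) : IsFactor u w := by
  obtain ⟨i, hi⟩ := h
  rw [List.length_append, toListW_add] at hi
  exact ⟨i, (List.append_inj hi (by simp)).1⟩

theorem IsFactor.of_append_right {u v : List α} (h : IsFactor (u ++ v) w) : IsFactor v w := by
  obtain ⟨i, hi⟩ := h
  rw [List.length_append, toListW_add] at hi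
  exact ⟨i + u.length, (List.append_inj hi (by simp)).2⟩

theorem isFactor_append_toListW_append {u v : List α} {i j : ℕ}
    (hu : toListW w i u.length = u) (hv : toListW w j v.length = v) (hij : i + u.length ≤ j) :
    IsFactor (u ++ toListW w (i + u.length) (j - (i + u.length)) ++ v) w := by
  refine ⟨i, ?_⟩
  have hj : i + (u.length + (j - (i + u.length))) = j := by omega
  simp only [List.length_append, toListW_length, toListW_add, hu, hj, hv]

def IsPrefixRecurrent (w : ℕ → α) : Prop :=
  ∀ N, ∃ j, N ≤ j ∧ ∀ t < N, w (j + t) = w t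

theorem IsPrefixRecurrent.exists_isFactor_append (hrec : IsPrefixRecurrent w) {u v : List α}
    (hu : IsFactor u w) (hv : IsFactor v w) : ∃ m, IsFactor (u ++ m ++ v) w := by
  obtain ⟨i, hi⟩ := hu
  obtain ⟨i', hi'⟩ := hv
  obtain ⟨j, hj, hper⟩ := hrec (max (i + u.length) (i' + v.length))
  have hv' : toListW w (j + i') v.length = v :=
    (toListW_congr fun t ht => by rw [Nat.add_assoc]; exact hper _ (by omega)).trans hi'
  exact ⟨_, isFactor_append_toListW_append hi hv' (by omega)⟩

theorem IsPrefixW.append_left {u v : List α} (h : IsPrefixW (u ++ v) w) : IsPrefixW u w := by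
  unfold IsPrefixW at h ⊢
  rw [List.length_append, toListW_add] at h
  exact (List.append_inj h (by simp)).1

theorem IsPrefixW.toListW_of_append {u v : List α} (h : IsPrefixW (u ++ v) w) :
    toListW w u.length v.length = v := by
  unfold IsPrefixW at h
  rw [List.length_append, toListW_add] at h
  simpa using (List.append_inj h (by simp)).2

theorem IsPrefixW.prefix_of_length_le {u v : List α} (hu : IsPrefixW u w) (hv : IsPrefixW v w)
    (huv : u.length ≤ v.length) : u <+: v := by
  refine ⟨toListW w u.length (v.length - u.length), ?_⟩
  conv_rhs => rw [← hv, ← Nat.add_sub_cancel' huv]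
  rw [toListW_add, Nat.zero_add, hu]

end Words

section Morphism

variable {α : Type*} {φ : α → List α}

theorem applyM_append (u v : List α) : applyM φ (u ++ v) = applyM φ u ++ applyM φ v :=
  List.flatMap_append

theorem applyM_iterate_append (n : ℕ) (u v : List α) :
    (applyM φ)^[n] (u ++ v) = (applyM φ)^[n] u ++ (applyM φ)^[n] v := by
  induction n generalizing u v with
  | zero => rfl
  | succ n ih => simp only [Function.iterate_succ_apply, applyM_append, ih]

variable {b : α} {w : ℕ → α}

theorem isPrefixW_applyM (hpref : ∀ n, IsPrefixW ((applyM φ)^[n] [b]) w)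
    (hlen : ∀ N, ∃ n, N ≤ ((applyM φ)^[n] [b]).length) {u : List α} (hu : IsPrefixW u w) :
    IsPrefixW (applyM φ u) w := by
  obtain ⟨n, hn⟩ := hlen u.length
  obtain ⟨r, hr⟩ := hu.prefix_of_length_le (hpref n) hn
  have h := hpref (n + 1)
  rw [Function.iterate_succ_apply', ← hr, applyM_append] at h
  exact h.append_left

theorem isPrefixW_iterate_applyM (hpref : ∀ n, IsPrefixW ((applyM φ)^[n] [b]) w)
    (hlen : ∀ N, ∃ n, N ≤ ((applyM φ)^[n] [b]).length) {u : List α} (hu : IsPrefixW u w) (n : ℕ) :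
    IsPrefixW ((applyM φ)^[n] u) w := by
  induction n with
  | zero => exact hu
  | succ n ih => rw [Function.iterate_succ_apply']; exact isPrefixW_applyM hpref hlen ih

theorem isPrefixRecurrent_of_iterate_applyM (hpref : ∀ n, IsPrefixW ((applyM φ)^[n] [b]) w)
    (hlen : ∀ N, ∃ n, N ≤ ((applyM φ)^[n] [b]).length) (htwice : ∃ i, 0 < i ∧ w i = w 0) :
    IsPrefixRecurrent w := by
  intro N
  obtain ⟨i, hi, hwi⟩ := htwice
  obtain ⟨n, hn⟩ := hlen N
  have hw0 : w 0 = b := by simpa [IsPrefixW, toListW] using hpref 0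
  set r := toListW w 1 (i - 1)
  have hbrb : IsPrefixW ([b] ++ r ++ [b]) w := by
    have h := toListW_succ w 0 (1 + (i - 1))
    rw [toListW_one_add, show 0 + (1 + (i - 1)) = i by omega, hwi, hw0] at h
    simpa [h] using isPrefixW_toListW w (1 + (i - 1) + 1)
  have hP := isPrefixW_iterate_applyM hpref hlen hbrb n
  rw [applyM_iterate_append, applyM_iterate_append] at hP
  set p := (applyM φ)^[n] [b]
  refine ⟨(p ++ (applyM φ)^[n] r).length, by simp; omega, fun t ht => ?_⟩
  have h := hP.toListW_of_append.trans (hpref n).symm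
  simpa using eq_of_toListW_eq h (t := t) (by omega)

end Morphism

theorem FreeMonoid.eq_and_eq_of_mul_eq_mul_of_length_le {α : Type*} {a b c d : FreeMonoid α}
    (h : a * b = c * d) (hac : a.length ≤ c.length) (hbd : b.length ≤ d.length) : a = c ∧ b = d := by
  have hlen : a.length = c.length := by
    have := congrArg FreeMonoid.length h
    simp only [FreeMonoid.length_mul] at this
    omega
  have := List.append_inj (congrArg FreeMonoid.toList h) hlen
  exact ⟨FreeMonoid.toList.injective this.1, FreeMonoid.toList.injective this.2⟩

namespace MonoidAlgebra

/-- Maximality of the lengths of `v` and `v'` makes `v u v'` arise in only one way as a product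
of monomials of `P * single u 1` and of `Q`. -/
theorem coeff_mul_single_mul_of_forall_length_le {k α : Type*} [Semiring k]
    {P Q : MonoidAlgebra k (FreeMonoid α)} {v v' : FreeMonoid α}
    (hv : ∀ g ∈ P.coeff.support, g.length ≤ v.length)
    (hv' : ∀ g ∈ Q.coeff.support, g.length ≤ v'.length) (u : FreeMonoid α) :
    (P * single u 1 * Q).coeff (v * u * v') = P.coeff v * Q.coeff v' := by
  classical
  have hleft : (P * single u 1).coeff (v * u) = P.coeff v := by
    rw [coeff_mul_single_eq_coeff_mul v fun m _ => mul_left_inj u, mul_one]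
  rw [coeff_mul_mul_of_uniqueMul, hleft]
  intro a a' ha ha' h
  obtain ⟨g, hg, rfl⟩ := Finset.mem_image.mp (support_coeff_mul_single_subset P 1 u ha)
  exact FreeMonoid.eq_and_eq_of_mul_eq_mul_of_length_le h
    (by simp [FreeMonoid.length_mul, hv g hg]) (hv' a' ha')

variable {k M : Type*} [Semiring k] [Mul M] {S : Set M}

theorem mul_mem_supported_of_right (x : MonoidAlgebra k M) {y : MonoidAlgebra k M}
    (hy : y ∈ supported k k S) (hS : ∀ a, ∀ m ∈ S, a * m ∈ S) : x * y ∈ supported k k S := by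
  classical
  intro m hm
  obtain ⟨a, -, b, hb, rfl⟩ := Finset.mem_mul.mp (support_coeff_mul_subset x y hm)
  exact hS a b (hy hb)

theorem mul_mem_supported_of_left {x : MonoidAlgebra k M} (hx : x ∈ supported k k S)
    (y : MonoidAlgebra k M) (hS : ∀ m ∈ S, ∀ a, m * a ∈ S) : x * y ∈ supported k k S := by
  classical
  intro m hm
  obtain ⟨a, ha, b, -, rfl⟩ := Finset.mem_mul.mp (support_coeff_mul_subset x y hm)
  exact hS a (hx ha) b

end MonoidAlgebra

open MonoidAlgebra

theorem FreeAlgebra.equivMonoidAlgebraFreeMonoid_symm_single_one {k α : Type*} [CommSemiring k]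
    (m : FreeMonoid α) :
    FreeAlgebra.equivMonoidAlgebraFreeMonoid.symm (single m (1 : k)) =
      (m.toList.map (FreeAlgebra.ι k)).prod := by
  simp [FreeAlgebra.equivMonoidAlgebraFreeMonoid, FreeMonoid.lift_apply]

section NonFactorIdeal

variable (k : Type*) [Ring k] {α : Type*} (w : ℕ → α)

noncomputable def nonFactorIdeal : TwoSidedIdeal (MonoidAlgebra k (FreeMonoid α)) :=
  .mk' (supported k k {m : FreeMonoid α | ¬ IsFactor m.toList w}) (zero_mem _) add_mem neg_mem
    (fun {x _} hy => mul_mem_supported_of_right x hy fun _ _ hm hf => hm hf.of_append_right)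
    (fun {_ y} hx => mul_mem_supported_of_left hx y fun _ hm _ hf => hm hf.of_append_left)

variable {k w} in
theorem mem_nonFactorIdeal {P : MonoidAlgebra k (FreeMonoid α)} :
    P ∈ nonFactorIdeal k w ↔ ∀ m ∈ P.coeff.support, ¬ IsFactor m.toList w :=
  TwoSidedIdeal.mem_mk' ..

theorem single_mem_nonFactorIdeal {m : FreeMonoid α} (hm : ¬ IsFactor m.toList w) :
    single m (1 : k) ∈ nonFactorIdeal k w := by
  rw [mem_nonFactorIdeal]
  intro m' hm'
  rw [coeff_single, Finsupp.mem_support_single] at hm'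
  exact hm'.1 ▸ hm

end NonFactorIdeal

namespace Aw

variable (k : Type*) [Field k] {α : Type*} (w : ℕ → α)

noncomputable def ofMonoidAlgebra : MonoidAlgebra k (FreeMonoid α) →ₐ[k] Aw k w :=
  (RingQuot.mkAlgHom k (relOf k w)).comp
    FreeAlgebra.equivMonoidAlgebraFreeMonoid.symm.toAlgHom

theorem ofMonoidAlgebra_apply (P : MonoidAlgebra k (FreeMonoid α)) :
    ofMonoidAlgebra k w P =
      RingQuot.mkAlgHom k (relOf k w) (FreeAlgebra.equivMonoidAlgebraFreeMonoid.symm P) :=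
  rfl

theorem ofMonoidAlgebra_surjective : Function.Surjective (ofMonoidAlgebra k w) :=
  (RingQuot.mkAlgHom_surjective k (relOf k w)).comp
    FreeAlgebra.equivMonoidAlgebraFreeMonoid.symm.surjective

theorem ofMonoidAlgebra_single_eq_zero {m : FreeMonoid α} (hm : ¬ IsFactor m.toList w) :
    ofMonoidAlgebra k w (single m 1) = 0 := by
  rw [ofMonoidAlgebra_apply, FreeAlgebra.equivMonoidAlgebraFreeMonoid_symm_single_one,
    RingQuot.mkAlgHom_rel k ⟨rfl, m.toList, hm, rfl⟩, map_zero]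

theorem ker_ofMonoidAlgebra : TwoSidedIdeal.ker (ofMonoidAlgebra k w) = nonFactorIdeal k w := by
  refine le_antisymm (fun P hP => ?_) (fun P hP => ?_)
  · -- `θ ∘ ofMonoidAlgebra` is the quotient map by `nonFactorIdeal`
    let θ : Aw k w →+* (nonFactorIdeal k w).ringCon.Quotient :=
      RingQuot.lift ⟨(nonFactorIdeal k w).ringCon.mk'.comp
        FreeAlgebra.equivMonoidAlgebraFreeMonoid.toRingEquiv.toRingHom, by
        rintro _ _ ⟨rfl, v, hv, rfl⟩
        have h := FreeAlgebra.equivMonoidAlgebraFreeMonoid_symm_single_one (k := k)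
          (FreeMonoid.ofList v)
        rw [FreeMonoid.toList_ofList, AlgEquiv.symm_apply_eq] at h
        rw [RingHom.comp_apply, RingHom.comp_apply, map_zero, map_zero, ← TwoSidedIdeal.mem_ker,
          TwoSidedIdeal.ker_ringCon_mk']
        exact h ▸ single_mem_nonFactorIdeal k w hv⟩
    have : θ (ofMonoidAlgebra k w P) = (nonFactorIdeal k w).ringCon.mk' P := by
      rw [ofMonoidAlgebra_apply, ← AlgHom.coe_toRingHom, RingQuot.mkAlgHom_coe,
        RingQuot.lift_mkRingHom_apply]
      simp
    rw [← TwoSidedIdeal.ker_ringCon_mk' (nonFactorIdeal k w), TwoSidedIdeal.mem_ker, ← this,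
      (TwoSidedIdeal.mem_ker _).mp hP, map_zero]
  · rw [TwoSidedIdeal.mem_ker]
    have hP' : P ∈ supported k k {m : FreeMonoid α | ¬ IsFactor m.toList w} :=
      fun m hm => mem_nonFactorIdeal.mp hP m hm
    clear hP
    rw [supported_eq_span_single] at hP'
    induction hP' using Submodule.span_induction with
    | mem _ h => obtain ⟨m, hm, rfl⟩ := h; exact ofMonoidAlgebra_single_eq_zero k w hm
    | zero => exact map_zero _
    | add _ _ _ _ h₁ h₂ => rw [map_add, h₁, h₂, add_zero]
    | smul c _ _ h => rw [map_smul, h, smul_zero]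

theorem exists_ofMonoidAlgebra_eq (a : Aw k w) : ∃ P : MonoidAlgebra k (FreeMonoid α),
    (∀ m ∈ P.coeff.support, IsFactor m.toList w) ∧ ofMonoidAlgebra k w P = a := by
  classical
  obtain ⟨P, rfl⟩ := ofMonoidAlgebra_surjective k w a
  refine ⟨ofCoeff (P.coeff.filter fun m => IsFactor m.toList w), fun m hm => ?_, ?_⟩
  · simp only [Finsupp.support_filter, Finset.mem_filter] at hm
    exact hm.2
  · have hsub : P - ofCoeff (P.coeff.filter fun m => IsFactor m.toList w) ∈
        nonFactorIdeal k w := by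
      refine mem_nonFactorIdeal.mpr fun m hm hf => Finsupp.mem_support_iff.mp hm ?_
      simp [hf]
    rw [← ker_ofMonoidAlgebra, TwoSidedIdeal.mem_ker, map_sub, sub_eq_zero] at hsub
    exact hsub.symm

variable {k w}

theorem eq_zero_or_eq_zero_of_forall_mul_mul_eq_zero
    (hglue : ∀ u v, IsFactor u w → IsFactor v w → ∃ m, IsFactor (u ++ m ++ v) w)
    {a c : Aw k w} (h : ∀ r, a * r * c = 0) : a = 0 ∨ c = 0 := by
  classical
  by_contra! hac
  obtain ⟨P, hP, rfl⟩ := exists_ofMonoidAlgebra_eq k w a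
  obtain ⟨Q, hQ, rfl⟩ := exists_ofMonoidAlgebra_eq k w c
  have hP0 : P.coeff.support.Nonempty := by
    rw [Finsupp.support_nonempty_iff, Ne, coeff_eq_zero]; rintro rfl; simp at hac
  have hQ0 : Q.coeff.support.Nonempty := by
    rw [Finsupp.support_nonempty_iff, Ne, coeff_eq_zero]; rintro rfl; simp at hac
  obtain ⟨v, hv, hvmax⟩ := P.coeff.support.exists_max_image FreeMonoid.length hP0
  obtain ⟨v', hv', hv'max⟩ := Q.coeff.support.exists_max_image FreeMonoid.length hQ0
  obtain ⟨m, hm⟩ := hglue _ _ (hP v hv) (hQ v' hv')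
  set u := FreeMonoid.ofList m
  have hmem : P * single u 1 * Q ∈ nonFactorIdeal k w := by
    rw [← ker_ofMonoidAlgebra, TwoSidedIdeal.mem_ker, map_mul, map_mul]
    exact h _
  have hsupp : v * u * v' ∈ (P * single u 1 * Q).coeff.support := by
    rw [Finsupp.mem_support_iff, coeff_mul_single_mul_of_forall_length_le hvmax hv'max]
    exact mul_ne_zero (Finsupp.mem_support_iff.mp hv) (Finsupp.mem_support_iff.mp hv')
  exact mem_nonFactorIdeal.mp hmem _ hsupp
    (by rwa [FreeMonoid.toList_mul, FreeMonoid.toList_mul, FreeMonoid.toList_ofList])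

end Aw

theorem stmt18_general (k : Type*) [Field k] {α : Type*}
    (φ : α → List α) (b : α)
    (w : ℕ → α)
    (hpref : ∀ n : ℕ, IsPrefixW ((applyM φ)^[n] [b]) w)
    (hlen : ∀ N : ℕ, ∃ n : ℕ, N ≤ ((applyM φ)^[n] [b]).length)
    (htwice : ∃ i : ℕ, 0 < i ∧ w i = w 0) :
    -- `A_w` is a prime ring
    ∀ a c : Aw k w, (∀ r : Aw k w, a * r * c = 0) → a = 0 ∨ c = 0 :=
  fun _ _ => Aw.eq_zero_or_eq_zero_of_forall_mul_mul_eq_zero fun _ _ =>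
    (isPrefixRecurrent_of_iterate_applyM hpref hlen htwice).exists_isFactor_append

theorem stmt18 (k : Type*) [Field k] {α : Type*} [Fintype α]
    (φ : α → List α) (b : α) (x : List α)
    (hx : x ≠ []) (hb : φ b = b :: x)
    (w : ℕ → α)
    (hpref : ∀ n : ℕ, IsPrefixW ((applyM φ)^[n] [b]) w)
    (hlen : ∀ N : ℕ, ∃ n : ℕ, N ≤ ((applyM φ)^[n] [b]).length)
    (hfirst : w 0 = b)
    (hnp : ¬ EventuallyPeriodic w)
    (hocc : ∀ a : α, ∃ i : ℕ, w i = a)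
    (htwice : ∃ i : ℕ, 0 < i ∧ w i = w 0) :
    -- `A_w` is a prime ring
    ∀ a c : Aw k w, (∀ r : Aw k w, a * r * c = 0) → a = 0 ∨ c = 0 :=
  stmt18_general k φ b w hpref hlen htwice
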